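/- Let p be an odd prime that is not a Wieferich prime (2^(p-1) ≢ 1 mod p²), ζ a primitive p-th root of unity, and φ(z) = (z − 1)^p + 2 − ζ. Then for every m ≥ 1, there exists a prime ideal 𝔮 of ℤ[ζ] such that the 𝔮-adic valuation of φ^m(1) is not divisible by p. -/

import Mathlib

/-!
Write `x = φ^[m] 1` and `λ = ζ - 1`. Since `λ ∣ φ^[k] 1 - 1` for every `k`, the shape of `φ` gives
`x ≡ 2 - ζ [mod λ^p]`. The ideal `(λ^p)` is Galois-stable, so taking norms (products of conjugates)
gives `N x ≡ N (2 - ζ) = Φ_p(2) = 2^p - 1` modulo `λ^p`, hence modulo `p^2` because `N λ = p`.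
If every valuation of `x` were divisible by `p`, then `(x)` would be the `p`-th power of an ideal,
so `N x = s^p` for an integer `s`. Then `s^p ≡ 1 [mod p]`, which lifts to `s^p ≡ 1 [mod p^2]`;
thus `2^p - 1 ≡ 1 [mod p^2]`, i.e. `p` is a Wieferich prime.
-/

open NumberField UniqueFactorizationMonoid

section Iteration

variable {R : Type*} [CommRing R] {ζ : R} {n : ℕ} {φ : R → R}

theorem sub_one_dvd_iterate_sub_one (hφ : ∀ z, φ z = (z - 1) ^ n + 2 - ζ) (hn : n ≠ 0) (k : ℕ) :
    ζ - 1 ∣ φ^[k] 1 - 1 := by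
  induction k with
  | zero => simp
  | succ k ih =>
    rw [Function.iterate_succ_apply', hφ,
      show ∀ a : R, a ^ n + 2 - ζ - 1 = a ^ n - (ζ - 1) by intro a; ring]
    exact dvd_sub (dvd_pow ih hn) dvd_rfl

theorem sub_one_pow_dvd_iterate_sub (hφ : ∀ z, φ z = (z - 1) ^ n + 2 - ζ) (hn : n ≠ 0) {m : ℕ}
    (hm : 1 ≤ m) : (ζ - 1) ^ n ∣ φ^[m] 1 - (2 - ζ) := by
  obtain ⟨k, rfl⟩ := Nat.exists_eq_add_of_le' hm
  rw [Function.iterate_succ_apply', hφ, show ∀ a : R, a + 2 - ζ - (2 - ζ) = a by intro a; ring]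
  exact pow_dvd_pow_of_dvd (sub_one_dvd_iterate_sub_one hφ hn k) n

end Iteration

theorem Prime.sq_dvd_of_pow_succ_dvd_pow {α : Type*} [CommMonoidWithZero α] [IsCancelMulZero α]
    {π D : α} (hπ : Prime π) {k : ℕ} (h : π ^ (k + 1) ∣ D ^ k) : π ^ 2 ∣ D := by
  obtain ⟨E, rfl⟩ := hπ.dvd_of_dvd_pow ((dvd_pow_self π k.succ_ne_zero).trans h)
  rw [pow_succ, mul_pow] at h
  have hE : π ∣ E := hπ.dvd_of_dvd_pow ((mul_dvd_mul_iff_left (pow_ne_zero k hπ.ne_zero)).mp h)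
  rw [sq]
  exact mul_dvd_mul_left π hE

theorem Int.sq_dvd_pow_sub_one_of_dvd {p : ℕ} (hp : p.Prime) {s : ℤ} (h : (p : ℤ) ∣ s ^ p - 1) :
    (p : ℤ) ^ 2 ∣ s ^ p - 1 := by
  have := Fact.mk hp
  have hs : (p : ℤ) ∣ s - 1 := by
    rw [← ZMod.intCast_zmod_eq_zero_iff_dvd] at h ⊢
    push_cast at h ⊢
    rwa [ZMod.pow_card] at h
  simpa using dvd_sub_pow_of_dvd_sub hs 1

theorem Int.exists_eq_pow_of_natAbs_eq_pow {N : ℤ} {n k : ℕ} (hk : Odd k)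
    (h : N.natAbs = n ^ k) : ∃ s : ℤ, N = s ^ k := by
  rcases Int.natAbs_eq N with hN | hN
  · exact ⟨n, by rw [hN, h]; push_cast; rfl⟩
  · exact ⟨-n, by rw [hN, h, hk.neg_pow]; push_cast; rfl⟩

theorem two_pow_pred_eq_one_of_sq_dvd {p : ℕ} (hp : p.Prime) (hodd : Odd p) {s : ℤ}
    (h : (p : ℤ) ^ 2 ∣ s ^ p - (2 ^ p - 1)) : (2 : ZMod (p ^ 2)) ^ (p - 1) = 1 := by
  have := Fact.mk hp
  have hs : (p : ℤ) ∣ s ^ p - 1 := by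
    have h' := (dvd_pow_self (p : ℤ) two_ne_zero).trans h
    rw [← ZMod.intCast_zmod_eq_zero_iff_dvd] at h' ⊢
    push_cast at h' ⊢
    rwa [ZMod.pow_card (2 : ZMod p), show (2 : ZMod p) - 1 = 1 by ring] at h'
  have h2 := Int.sq_dvd_pow_sub_one_of_dvd hp hs
  rw [← Int.natCast_pow, ← ZMod.intCast_zmod_eq_zero_iff_dvd] at h h2
  push_cast at h h2
  have hunit : IsUnit (2 : ZMod (p ^ 2)) := by
    simpa using
      (ZMod.isUnit_iff_coprime 2 (p ^ 2)).mpr ((Nat.coprime_two_left.mpr hodd).pow_right 2)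
  apply hunit.mul_left_cancel
  rw [← pow_succ', Nat.sub_add_cancel hp.one_le]
  linear_combination h2 - h

theorem UniqueFactorizationMonoid.exists_associated_pow_of_dvd_count {α : Type*}
    [CommMonoidWithZero α] [NormalizationMonoid α] [UniqueFactorizationMonoid α] [DecidableEq α]
    {a : α} {k : ℕ} (hk : k ≠ 0)
    (h : ∀ q ∈ normalizedFactors a, k ∣ (normalizedFactors a).count q) :
    ∃ b, Associated (b ^ k) a := by
  by_cases ha : a = 0
  · exact ⟨0, by rw [ha, zero_pow hk]⟩
  obtain ⟨t, ht⟩ := Multiset.exists_smul_of_dvd_count _ h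
  exact ⟨t.prod, by rw [← Multiset.prod_nsmul, ← ht]; exact prod_normalizedFactors ha⟩

theorem NumberField.exists_norm_eq_pow_of_dvd_count {K : Type*} [Field K] [NumberField K]
    [DecidableEq (Ideal (𝓞 K))] {x : 𝓞 K} {k : ℕ} (hk : Odd k)
    (h : ∀ q : Ideal (𝓞 K), q.IsPrime → k ∣ (normalizedFactors (Ideal.span {x})).count q) :
    ∃ s : ℤ, Algebra.norm ℤ x = s ^ k := by
  obtain ⟨J, hJ⟩ := exists_associated_pow_of_dvd_count hk.pos.ne' fun q hq ↦
    h q (Ideal.isPrime_of_prime (prime_of_normalized_factor q hq))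
  apply Int.exists_eq_pow_of_natAbs_eq_pow hk
  rw [← Ideal.absNorm_span_singleton, ← associated_iff_eq.mp hJ, map_pow]

section NormCongruence

variable {K : Type*} [Field K] [NumberField K] [IsGalois ℚ K]

theorem NumberField.RingOfIntegers.algebraMap_norm_eq_prod (x : 𝓞 K) :
    algebraMap ℤ (𝓞 K) (Algebra.norm ℤ x) = ∏ σ : 𝓞 K ≃ₐ[ℤ] 𝓞 K, σ x := by
  rw [← Fintype.prod_equiv (galRestrict ℤ ℚ K (𝓞 K)).toEquiv
    (fun σ ↦ galRestrict ℤ ℚ K (𝓞 K) σ x) (fun σ ↦ σ x) fun _ ↦ rfl, prod_galRestrict_eq_norm]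
  congr 1
  apply Int.cast_injective (α := ℚ)
  rw [Algebra.coe_norm_int]
  exact (IsIntegralClosure.algebraMap_mk' (R := ℤ) ℤ _ _).symm

theorem NumberField.RingOfIntegers.dvd_algebraMap_norm_sub_norm {d x y : 𝓞 K}
    (hd : ∀ σ : 𝓞 K ≃ₐ[ℤ] 𝓞 K, d ∣ σ d) (h : d ∣ x - y) :
    d ∣ algebraMap ℤ (𝓞 K) (Algebra.norm ℤ x - Algebra.norm ℤ y) := by
  rw [map_sub, algebraMap_norm_eq_prod, algebraMap_norm_eq_prod, ← Ideal.mem_span_singleton,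
    ← Ideal.Quotient.eq, map_prod, map_prod]
  refine Finset.prod_congr rfl fun σ _ ↦ ?_
  rw [Ideal.Quotient.eq, Ideal.mem_span_singleton, ← map_sub]
  exact (hd σ).trans (map_dvd σ h)

end NormCongruence

open Polynomial in
theorem IsPrimitiveRoot.norm_sub_eq_eval_cyclotomic {n : ℕ} [NeZero n] {K L : Type*} [Field K]
    [Field L] [Algebra K L] [IsCyclotomicExtension {n} K L] {ζ : L} (hζ : IsPrimitiveRoot ζ n)
    (hirr : Irreducible (cyclotomic n K)) (a : K) :
    Algebra.norm K (algebraMap K L a - ζ) = (cyclotomic n K).eval a := by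
  have := IsCyclotomicExtension.finiteDimensional {n} K L
  have := IsCyclotomicExtension.isGalois {n} K L
  let E := AlgebraicClosure L
  have hζE : IsPrimitiveRoot (algebraMap L E ζ) n := hζ.map_of_injective (algebraMap L E).injective
  apply (algebraMap K E).injective
  rw [Algebra.norm_eq_prod_embeddings, ← eval₂_at_apply, ← eval_map, map_cyclotomic,
    cyclotomic_eq_prod_X_sub_primitiveRoots hζE, eval_prod,
    ← Finset.prod_coe_sort (primitiveRoots n E)]
  exact Fintype.prod_equiv (hζ.embeddingsEquivPrimitiveRoots E hirr) _ _ fun σ ↦ by simp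

namespace IsPrimitiveRoot

variable {p : ℕ} [Fact p.Prime] {K : Type*} [Field K] [NumberField K]
  [IsCyclotomicExtension {p} ℚ K] {ζ : 𝓞 K}

theorem norm_two_sub (hζ : IsPrimitiveRoot ζ p) : Algebra.norm ℤ (2 - ζ) = 2 ^ p - 1 := by
  have hζK : IsPrimitiveRoot (ζ : K) p := hζ.map_of_injective RingOfIntegers.coe_injective
  have hcoe : ((2 - ζ : 𝓞 K) : K) = algebraMap ℚ K 2 - ζ := by
    rw [map_ofNat, RingOfIntegers.coe_eq_algebraMap, map_sub, map_ofNat]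
  apply Int.cast_injective (α := ℚ)
  rw [Algebra.coe_norm_int, hcoe, hζK.norm_sub_eq_eval_cyclotomic
    (Polynomial.cyclotomic.irreducible_rat (Fact.out : p.Prime).pos), Polynomial.cyclotomic_prime,
    Polynomial.eval_geom_sum]
  push_cast
  linear_combination geom_sum_mul (2 : ℚ) p

theorem norm_sub_one (hζ : IsPrimitiveRoot ζ p) (hp : p ≠ 2) : Algebra.norm ℤ (ζ - 1) = p :=
  (hζ.map_of_injective RingOfIntegers.coe_injective).norm_toInteger_sub_one_of_prime_ne_two' hp

theorem sq_dvd_of_sub_one_pow_dvd (hζ : IsPrimitiveRoot ζ p) (hp : p ≠ 2) {D : ℤ}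
    (h : (ζ - 1) ^ p ∣ algebraMap ℤ (𝓞 K) D) : (p : ℤ) ^ 2 ∣ D := by
  have hrank : Module.finrank ℤ (𝓞 K) = p - 1 := by
    rw [RingOfIntegers.rank, IsCyclotomicExtension.finrank K
      (Polynomial.cyclotomic.irreducible_rat (Fact.out : p.Prime).pos), Nat.totient_prime Fact.out]
  have hnorm := map_dvd (Algebra.norm ℤ) h
  rw [map_pow, hζ.norm_sub_one hp, Algebra.norm_algebraMap, hrank] at hnorm
  refine (Nat.prime_iff_prime_int.mp Fact.out).sq_dvd_of_pow_succ_dvd_pow (k := p - 1) ?_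
  rwa [Nat.sub_add_cancel (Fact.out : p.Prime).one_le]

theorem sq_dvd_norm_sub_of_sub_one_pow_dvd (hζ : IsPrimitiveRoot ζ p) (hp : p ≠ 2) {x : 𝓞 K}
    (h : (ζ - 1) ^ p ∣ x - (2 - ζ)) : (p : ℤ) ^ 2 ∣ Algebra.norm ℤ x - (2 ^ p - 1) := by
  have := IsCyclotomicExtension.isGalois {p} ℚ K
  have : NeZero p := ⟨(Fact.out : p.Prime).ne_zero⟩
  refine hζ.sq_dvd_of_sub_one_pow_dvd hp ?_
  rw [← hζ.norm_two_sub]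
  refine RingOfIntegers.dvd_algebraMap_norm_sub_norm (fun σ ↦ ?_) h
  rw [map_pow]
  exact pow_dvd_pow_of_dvd (hζ.associated_sub_one_map_sub_one σ).dvd p

end IsPrimitiveRoot

theorem exists_prime_val_not_div (p : ℕ+) (hp : Fact (p : ℕ).Prime) (hodd : Odd (p : ℕ))
    (hw : (2 : ZMod ((p : ℕ) ^ 2)) ^ ((p : ℕ) - 1) ≠ 1)
    (K : Type*) [Field K] [Algebra ℚ K] [IsCyclotomicExtension {(p : ℕ)} ℚ K] [NumberField K]
    (ζ : 𝓞 K) (hζ : IsPrimitiveRoot ζ (p : ℕ))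
    (φ : 𝓞 K → 𝓞 K) (hφ : ∀ z, φ z = (z - 1) ^ (p : ℕ) + 2 - ζ) :
    ∀ m : ℕ, 1 ≤ m → ∃ q : Ideal (𝓞 K), q.IsPrime ∧
      ¬ (p : ℕ) ∣ @Multiset.count _ (Classical.decEq _) q (normalizedFactors (Ideal.span {φ^[m] 1})) := by
  intro m hm
  by_contra! hcount
  let := Classical.decEq (Ideal (𝓞 K))
  obtain ⟨s, hs⟩ := NumberField.exists_norm_eq_pow_of_dvd_count hodd hcount
  have hp2 : (p : ℕ) ≠ 2 := fun h ↦ absurd (h ▸ hodd) (by decide)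
  -- a field of characteristic zero has a unique `ℚ`-algebra structure
  obtain rfl : ‹Algebra ℚ K› = DivisionRing.toRatAlgebra := Subsingleton.elim _ _
  have hcong := hζ.sq_dvd_norm_sub_of_sub_one_pow_dvd hp2
    (sub_one_pow_dvd_iterate_sub hφ hp.out.ne_zero hm)
  rw [hs] at hcong
  exact hw (two_pow_pred_eq_one_of_sq_dvd hp.out hodd hcong)
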